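/- arXiv:2408.01196 — 2 statements merged into one kernel-verified Lean document; each statement's English description precedes it below -/
import Mathlib

section
/- The social welfare sw(S) = Σᵢ uᵢ(S), where uᵢ(S) = λᵢ Σ_{j≠i} SᵢSⱼᵀ·D_{ij}·W_{ij} + Σ_{j≠i}(1 − SᵢSⱼᵀ)·ReLU(D_{ij})·W_{ij}, decomposes as sw(S) = tr{Sᵀ[(ΛD − B) ⊙ W]S} + tr(W·B), where B = ReLU(D) entrywise, Λ = diag(λ₁,…,λₙ), and ⊙ denotes the Hadamard product; in particular the second term tr(W·B) is independent of S. -/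
open Finset Matrix

/-- The social welfare `Σᵢ uᵢ(S)` with
`uᵢ(S) = λᵢ Σ_{j≠i} SᵢSⱼᵀ·D_{ij}·W_{ij} + Σ_{j≠i} (1 − SᵢSⱼᵀ)·ReLU(D_{ij})·W_{ij}`
decomposes as `tr{Sᵀ[(ΛD − B) ⊙ W]S} + tr(W·B)`, where `B = ReLU(D)` entrywise
and `Λ = diag(λ)`. -/
theorem stmt11 {n K : ℕ} (ψ : ℝ) (hψ : ψ ∈ Set.Ioo (0 : ℝ) 1)
    (lam : Fin n → ℝ) (hlam : ∀ i, 1 < lam i)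
    (x : Fin n → ℝ) (hx : ∀ i, x i ∈ Set.Icc (0 : ℝ) 1)
    (W : Matrix (Fin n) (Fin n) ℝ) (hW : ∀ i j, 0 ≤ W i j)
    (hWd : ∀ i, W i i = 0)
    (D B : Matrix (Fin n) (Fin n) ℝ)
    (hD : ∀ i j, D i j = ψ - |x i - x j|)
    (hB : ∀ i j, B i j = max (D i j) 0)
    (S : Matrix (Fin n) (Fin K) ℝ)
    (hbin : ∀ i k, S i k = 0 ∨ S i k = 1)
    (hrow : ∀ i, ∑ k, S i k = 1) :
    ∑ i, (lam i * ∑ j ∈ Finset.univ.erase i,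
            (∑ k, S i k * S j k) * D i j * W i j
          + ∑ j ∈ Finset.univ.erase i,
            (1 - ∑ k, S i k * S j k) * B i j * W i j)
      = (Sᵀ * Matrix.hadamard (Matrix.diagonal lam * D - B) W * S).trace
        + (W * B).trace := by
  have hBs : ∀ i j, B i j = B j i := fun i j => by
    rw [hB, hB, hD, hD, abs_sub_comm]
  have h1 : ∀ i : Fin n, ∑ j ∈ Finset.univ.erase i,
      (∑ k, S i k * S j k) * D i j * W i j
      = ∑ j, (∑ k, S i k * S j k) * D i j * W i j := fun i =>
    Finset.sum_erase _ (by simp [hWd i])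
  have h2 : ∀ i : Fin n, ∑ j ∈ Finset.univ.erase i,
      (1 - ∑ k, S i k * S j k) * B i j * W i j
      = ∑ j, (1 - ∑ k, S i k * S j k) * B i j * W i j := fun i =>
    Finset.sum_erase _ (by simp [hWd i])
  simp only [h1, h2]
  have htr1 : (Sᵀ * Matrix.hadamard (Matrix.diagonal lam * D - B) W * S).trace
      = ∑ j, ∑ i, (∑ k, S i k * S j k) * ((lam i * D i j - B i j) * W i j) := by
    rw [Matrix.trace]
    simp only [Matrix.diag, Matrix.mul_apply, Matrix.transpose_apply,
      Matrix.hadamard_apply, Matrix.sub_apply, Matrix.diagonal_mul,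
      Finset.sum_mul, Finset.mul_sum]
    rw [Finset.sum_comm]
    refine Finset.sum_congr rfl fun i _ => ?_
    rw [Finset.sum_comm]
    refine Finset.sum_congr rfl fun j _ => ?_
    refine Finset.sum_congr rfl fun k _ => ?_
    simp [Matrix.diagonal, Finset.sum_ite_eq, Finset.mul_sum, Finset.sum_mul]
    ring
  have htr2 : (W * B).trace = ∑ i, ∑ j, W i j * B i j := by
    rw [Matrix.trace]
    simp only [Matrix.diag, Matrix.mul_apply]
    exact Finset.sum_congr rfl fun i _ => Finset.sum_congr rfl fun j _ => by
      rw [hBs j i]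
  rw [htr1, htr2, Finset.sum_comm, ← Finset.sum_add_distrib]
  refine Finset.sum_congr rfl fun i _ => ?_
  rw [Finset.mul_sum, ← Finset.sum_add_distrib, ← Finset.sum_add_distrib]
  refine Finset.sum_congr rfl fun j _ => ?_
  ring
end

section
/- The social welfare sw(S, x) = tr{Sᵀ[(ΛD − B) ⊙ W]S} + tr(W·B) with λᵢ = λ for all i attains its maximum value λ·ψ·Σ_{i,j} W_{ij} exactly when all agents belong to a single community and all opinions are equal (so D_{ij} = ψ for all i,j). -/
/-! The welfare bound holds pair by pair: a pair in a common community contributes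
`λ (ψ - |xᵢ - xⱼ|) Wᵢⱼ ≤ λ ψ Wᵢⱼ`, with equality iff `xᵢ = xⱼ`, while a pair in different
communities contributes at most `ψ Wᵢⱼ`, which falls strictly short of `λ ψ Wᵢⱼ` as `λ > 1`. -/

open Finset

theorem sum_mul_eq_zero_or_one_of_mem_zero_one {ι : Type*} {t : Finset ι} {u v : ι → ℝ}
    (hu : ∀ k, u k = 0 ∨ u k = 1) (hv : ∀ k, v k = 0 ∨ v k = 1) (hsum : ∑ k ∈ t, u k = 1) :
    ∑ k ∈ t, u k * v k = 0 ∨ ∑ k ∈ t, u k * v k = 1 := by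
  have hterm : ∀ k, u k * v k = 0 ∨ u k * v k = 1 := fun k => by
    rcases hu k with h | h <;> rcases hv k with h' | h' <;> simp [h, h']
  have hnonneg : ∀ k, 0 ≤ u k * v k := fun k => (hterm k).elim (·.ge) (· ▸ zero_le_one)
  have hle : ∑ k ∈ t, u k * v k ≤ 1 := hsum ▸ sum_le_sum fun k _ => by
    rcases hu k with h | h <;> rcases hv k with h' | h' <;> simp [h, h']
  by_cases hone : ∃ k ∈ t, u k * v k = 1
  · obtain ⟨k, hk, hk1⟩ := hone
    have hk_le : u k * v k ≤ ∑ k ∈ t, u k * v k :=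
      single_le_sum (f := fun k => u k * v k) (fun k _ => hnonneg k) hk
    exact Or.inr (le_antisymm hle (hk1 ▸ hk_le))
  · simp only [not_exists, not_and] at hone
    exact Or.inl (sum_eq_zero fun k hk => (hterm k).resolve_right (hone k hk))

theorem sum_mul_le_sum_mul_and_eq_iff {ι : Type*} {t : Finset ι} {f g w : ι → ℝ}
    (hfg : ∀ i ∈ t, f i ≤ g i) (hw : ∀ i ∈ t, 0 ≤ w i) :
    ∑ i ∈ t, f i * w i ≤ ∑ i ∈ t, g i * w i ∧
      (∑ i ∈ t, f i * w i = ∑ i ∈ t, g i * w i ↔ ∀ i ∈ t, 0 < w i → f i = g i) := by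
  have hle : ∀ i ∈ t, f i * w i ≤ g i * w i := fun i hi =>
    mul_le_mul_of_nonneg_right (hfg i hi) (hw i hi)
  refine ⟨sum_le_sum hle, (sum_eq_sum_iff_of_le hle).trans (forall₂_congr fun i hi => ?_)⟩
  rcases (hw i hi).eq_or_lt with h0 | hpos
  · simp [← h0]
  · simp [hpos, hpos.ne']

/-- Welfare per unit link weight of a pair with co-membership `s = SᵢSⱼᵀ` and `d = Dᵢⱼ`. -/
def pairWelfare (lam s d : ℝ) : ℝ := lam * s * d + (1 - s) * max d 0

theorem pairWelfare_le {lam s d ψ : ℝ} (hlam : 1 ≤ lam) (hψ : 0 ≤ ψ) (hs : s = 0 ∨ s = 1)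
    (hd : d ≤ ψ) : pairWelfare lam s d ≤ lam * ψ := by
  rcases hs with rfl | rfl <;> simp only [pairWelfare]
  · nlinarith [max_le hd hψ]
  · nlinarith

theorem pairWelfare_eq_iff {lam s d ψ : ℝ} (hlam : 1 < lam) (hψ : 0 < ψ) (hs : s = 0 ∨ s = 1)
    (hd : d ≤ ψ) : pairWelfare lam s d = lam * ψ ↔ s = 1 ∧ d = ψ := by
  rcases hs with rfl | rfl <;> simp only [pairWelfare]
  · have : max d 0 < lam * ψ := (max_le hd hψ.le).trans_lt (by nlinarith)
    constructor
    · intro h; linarith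
    · rintro ⟨h, -⟩; norm_num at h
  · simp only [mul_one, sub_self, zero_mul, add_zero, true_and]
    exact mul_right_inj' (by positivity)

theorem stmt15_general {n K : ℕ} (ψ lamv : ℝ)
    (hψ : ψ ∈ Set.Ioo (0 : ℝ) 1) (hlam : 1 < lamv)
    (x : Fin n → ℝ)
    (W : Matrix (Fin n) (Fin n) ℝ) (hW : ∀ i j, 0 ≤ W i j)
    (S : Matrix (Fin n) (Fin K) ℝ)
    (hbin : ∀ i k, S i k = 0 ∨ S i k = 1)
    (hrow : ∀ i, ∑ k, S i k = 1) :
    (∑ i, ∑ j ∈ Finset.univ.erase i,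
        (lamv * (∑ k, S i k * S j k) * (ψ - |x i - x j|) * W i j
          + (1 - ∑ k, S i k * S j k) * max (ψ - |x i - x j|) 0 * W i j)
      ≤ lamv * ψ * ∑ i, ∑ j ∈ Finset.univ.erase i, W i j) ∧
    ((∑ i, ∑ j ∈ Finset.univ.erase i,
        (lamv * (∑ k, S i k * S j k) * (ψ - |x i - x j|) * W i j
          + (1 - ∑ k, S i k * S j k) * max (ψ - |x i - x j|) 0 * W i j)
      = lamv * ψ * ∑ i, ∑ j ∈ Finset.univ.erase i, W i j) ↔
      (∀ i j, j ≠ i → 0 < W i j → (∑ k, S i k * S j k) = 1 ∧ x i = x j)) := by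
  obtain ⟨hψ0, -⟩ := hψ
  have hs i j := sum_mul_eq_zero_or_one_of_mem_zero_one (hbin i) (hbin j) (hrow i)
  have hd i j : ψ - |x i - x j| ≤ ψ := sub_le_self _ (abs_nonneg _)
  have hsw : (∑ i, ∑ j ∈ univ.erase i,
        (lamv * (∑ k, S i k * S j k) * (ψ - |x i - x j|) * W i j
          + (1 - ∑ k, S i k * S j k) * max (ψ - |x i - x j|) 0 * W i j)) =
      ∑ p ∈ univ.sigma fun i => univ.erase i,
        pairWelfare lamv (∑ k, S p.1 k * S p.2 k) (ψ - |x p.1 - x p.2|) * W p.1 p.2 := by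
    rw [sum_sigma']
    exact sum_congr rfl fun _ _ => by simp only [pairWelfare]; ring
  have hmax : lamv * ψ * ∑ i, ∑ j ∈ univ.erase i, W i j =
      ∑ p ∈ univ.sigma fun i => univ.erase i, lamv * ψ * W p.1 p.2 := by
    rw [← mul_sum, sum_sigma' univ (fun i => univ.erase i) fun i j => W i j]
  rw [hsw, hmax]
  obtain ⟨hle, heq⟩ := sum_mul_le_sum_mul_and_eq_iff (t := univ.sigma fun i => univ.erase i)
    (fun p _ => pairWelfare_le hlam.le hψ0.le (hs p.1 p.2) (hd p.1 p.2)) fun p _ => hW p.1 p.2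
  refine ⟨hle, heq.trans ?_⟩
  simp only [pairWelfare_eq_iff hlam hψ0 (hs _ _) (hd _ _), mem_sigma, mem_univ, mem_erase,
    ne_eq, true_and, Sigma.forall, sub_eq_self, abs_eq_zero, sub_eq_zero, and_true]

/-- With common trust coefficient `λ > 1`, the social welfare is at most
`λ·ψ·Σ_{i≠j} W_{ij}`, with equality exactly when every connected pair shares a
community and holds the same opinion. -/
theorem stmt15 {n K : ℕ} (ψ lamv : ℝ)
    (hψ : ψ ∈ Set.Ioo (0 : ℝ) 1) (hlam : 1 < lamv)
    (x : Fin n → ℝ) (hx : ∀ i, x i ∈ Set.Icc (0 : ℝ) 1)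
    (W : Matrix (Fin n) (Fin n) ℝ) (hW : ∀ i j, 0 ≤ W i j)
    (hWd : ∀ i, W i i = 0)
    (S : Matrix (Fin n) (Fin K) ℝ)
    (hbin : ∀ i k, S i k = 0 ∨ S i k = 1)
    (hrow : ∀ i, ∑ k, S i k = 1) :
    (∑ i, ∑ j ∈ Finset.univ.erase i,
        (lamv * (∑ k, S i k * S j k) * (ψ - |x i - x j|) * W i j
          + (1 - ∑ k, S i k * S j k) * max (ψ - |x i - x j|) 0 * W i j)
      ≤ lamv * ψ * ∑ i, ∑ j ∈ Finset.univ.erase i, W i j) ∧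
    ((∑ i, ∑ j ∈ Finset.univ.erase i,
        (lamv * (∑ k, S i k * S j k) * (ψ - |x i - x j|) * W i j
          + (1 - ∑ k, S i k * S j k) * max (ψ - |x i - x j|) 0 * W i j)
      = lamv * ψ * ∑ i, ∑ j ∈ Finset.univ.erase i, W i j) ↔
      (∀ i j, j ≠ i → 0 < W i j → (∑ k, S i k * S j k) = 1 ∧ x i = x j)) :=
  stmt15_general ψ lamv hψ hlam x W hW S hbin hrow
end
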